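/- arXiv:math/0109056 — 3 statements merged into one kernel-verified Lean document; each statement's English description precedes it below -/
import Mathlib

section
/- Let Z(x,t) = x(1+it²) and for each positive integer k let g_k(x,t) = Z(x,t)² − 1/k². Then |g_k(x,t)|² = (1 + 2t⁴ + t⁸)x⁴ + ((2t⁴ − 2)/k²)x² + 1/k⁴, and for any 0 < δ ≤ M there exists a constant C(M,δ) > 0, independent of k, such that |g_k(x,t)| ≥ C(M,δ)/k² whenever δ ≤ |t| ≤ M and x ∈ ℝ. -/
/-!
Since `Z(x,t)² = x² w` with `w = (1 + i t²)²`, the value `g_k(x,t)` is the difference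
between a point of the real line `ℝ w` and the positive real `1/k²`. The distance from `1/k²`
to that line is `(1/k²) |Im w| / |w| = (1/k²) · 2t² / (1 + t⁴)`, and
`2t² / (1 + t⁴) ≥ 2δ² / (1 + M⁴)` for `δ ≤ |t| ≤ M`.
-/

open Complex

/-- `Z(x,t) = x(1+it²)` -/
noncomputable def Zfi (x t : ℝ) : ℂ := (x : ℂ) * (1 + Complex.I * (t : ℂ) ^ 2)

/-- `g_k(x,t) = Z(x,t)² − 1/k²` -/
noncomputable def gfk (k : ℕ) (x t : ℝ) : ℂ := (Zfi x t) ^ 2 - 1 / (k : ℂ) ^ 2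

open ComplexConjugate

theorem abs_mul_abs_im_le_norm_ofReal_mul_sub_ofReal_mul_norm (u c : ℝ) (w : ℂ) :
    |c| * |w.im| ≤ ‖(u : ℂ) * w - c‖ * ‖w‖ := by
  -- `u w conj w = u |w|²` is real, so only `-c conj w` contributes to the imaginary part.
  have him : ((u * w - c) * conj w).im = c * w.im := by
    simp only [sub_im, sub_re, mul_im, mul_re, ofReal_re, ofReal_im, conj_re, conj_im]
    ring
  calc |c| * |w.im| = |((u * w - c) * conj w).im| := by rw [him, abs_mul]
    _ ≤ ‖(u * w - c) * conj w‖ := abs_im_le_norm _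
    _ = ‖(u : ℂ) * w - c‖ * ‖w‖ := by rw [norm_mul, RCLike.norm_conj]

theorem gfk_eq (k : ℕ) (x t : ℝ) :
    gfk k x t =
      ((x ^ 2 : ℝ) : ℂ) * (1 + I * ((t ^ 2 : ℝ) : ℂ)) ^ 2 - ((1 / (k : ℝ) ^ 2 : ℝ) : ℂ) := by
  simp only [gfk, Zfi]
  push_cast
  ring

theorem re_one_add_I_mul_sq_sq (s : ℝ) : ((1 + I * (s : ℂ)) ^ 2).re = 1 - s ^ 2 := by
  simp [sq]

theorem im_one_add_I_mul_sq_sq (s : ℝ) : ((1 + I * (s : ℂ)) ^ 2).im = 2 * s := by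
  simp [sq]; ring

theorem norm_one_add_I_mul_sq (s : ℝ) : ‖(1 + I * (s : ℂ)) ^ 2‖ = 1 + s ^ 2 := by
  rw [norm_pow, ← normSq_eq_norm_sq, normSq_apply]
  simp; ring

theorem sq_norm_gfk (k : ℕ) (x t : ℝ) :
    ‖gfk k x t‖ ^ 2 =
      (1 + 2 * t ^ 4 + t ^ 8) * x ^ 4 + ((2 * t ^ 4 - 2) / (k : ℝ) ^ 2) * x ^ 2
        + 1 / (k : ℝ) ^ 4 := by
  rw [gfk_eq, ← normSq_eq_norm_sq, normSq_apply]
  simp only [sub_re, sub_im, re_ofReal_mul, im_ofReal_mul, ofReal_re, ofReal_im,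
    re_one_add_I_mul_sq_sq, im_one_add_I_mul_sq_sq]
  ring

theorem one_div_sq_mul_le_norm_gfk (k : ℕ) (x t : ℝ) :
    1 / (k : ℝ) ^ 2 * (2 * t ^ 2 / (1 + t ^ 4)) ≤ ‖gfk k x t‖ := by
  have hw := abs_mul_abs_im_le_norm_ofReal_mul_sub_ofReal_mul_norm (x ^ 2) (1 / (k : ℝ) ^ 2)
    ((1 + I * ((t ^ 2 : ℝ) : ℂ)) ^ 2)
  rw [im_one_add_I_mul_sq_sq, norm_one_add_I_mul_sq, abs_of_nonneg (by positivity),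
    abs_of_nonneg (by positivity), ← gfk_eq, ← pow_mul] at hw
  rw [← mul_div_assoc, div_le_iff₀ (by positivity)]
  exact hw

theorem two_mul_sq_div_one_add_pow_four_le {δ M t : ℝ} (hδ₀ : 0 ≤ δ) (hδ : δ ≤ |t|)
    (hM : |t| ≤ M) : 2 * δ ^ 2 / (1 + M ^ 4) ≤ 2 * t ^ 2 / (1 + t ^ 4) := by
  have hδt : δ ^ 2 ≤ t ^ 2 := by simpa using pow_le_pow_left₀ hδ₀ hδ 2
  have htM : t ^ 4 ≤ M ^ 4 := by
    simpa [Even.pow_abs ⟨2, rfl⟩] using pow_le_pow_left₀ (abs_nonneg t) hM 4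
  gcongr

theorem stmt4 :
    (∀ (k : ℕ), 0 < k → ∀ (x t : ℝ),
      (‖gfk k x t‖) ^ 2 =
        (1 + 2 * t ^ 4 + t ^ 8) * x ^ 4 + ((2 * t ^ 4 - 2) / (k : ℝ) ^ 2) * x ^ 2
          + 1 / (k : ℝ) ^ 4) ∧
    (∀ (M δ : ℝ), 0 < δ → δ ≤ M →
      ∃ C : ℝ, 0 < C ∧ ∀ (k : ℕ), 0 < k → ∀ (x t : ℝ),
        δ ≤ |t| → |t| ≤ M → C / (k : ℝ) ^ 2 ≤ ‖gfk k x t‖) := by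
  refine ⟨fun k _ ↦ sq_norm_gfk k, fun M δ hδ _ ↦
    ⟨2 * δ ^ 2 / (1 + M ^ 4), by positivity, fun k _ x t ht htM ↦ ?_⟩⟩
  calc 2 * δ ^ 2 / (1 + M ^ 4) / (k : ℝ) ^ 2
      = 1 / (k : ℝ) ^ 2 * (2 * δ ^ 2 / (1 + M ^ 4)) := by ring
    _ ≤ 1 / (k : ℝ) ^ 2 * (2 * t ^ 2 / (1 + t ^ 4)) :=
      mul_le_mul_of_nonneg_left (two_mul_sq_div_one_add_pow_four_le hδ.le ht htM) (by positivity)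
    _ ≤ ‖gfk k x t‖ := one_div_sq_mul_le_norm_gfk k x t
end

section
/- Let g: ℝ → ℂ be a polynomial function with deg g ≤ 2 (so that g''' = 0), and suppose g is nonvanishing on an open interval I with g(I) avoiding the branch cut of the principal square root. Then for every positive integer n, the n-th derivative of W = g^{1/2} on I satisfies D^n W = Σ_{j=0}^{⌊n/2⌋} A_j · g^{1/2 − n + j} · (Dg)^{n−2j} · (D²g)^j, where the constants A_j depend only on n and j (not on g). -/
open Set Complex
open scoped BigOperators

/-!
When `g''' = 0`, differentiating a monomial `g ^ (c - n + j) * (g') ^ (n - 2j) * (g'') ^ j` yields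
only monomials of the same shape one order higher: either the power of `g` drops by one and a `g'`
appears, or a `g'` turns into a `g''`. By induction, `D^n (g ^ c)` is a combination of such
monomials whose coefficients satisfy a recursion in which `g` does not occur, and they vanish for
`n < 2j`.
-/

/-- The recursion mirrors `hasDerivAt_cpowDerivTerm`: differentiating the monomial `(n, j)` gives
`c - n + j` times the monomial `(n + 1, j)` plus `n - 2j` times the monomial `(n + 1, j + 1)`. -/
def cpowDerivCoeff (c : ℂ) : ℕ → ℕ → ℂ
  | 0, j => if j = 0 then 1 else 0
  | n + 1, 0 => cpowDerivCoeff c n 0 * (c - n)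
  | n + 1, j + 1 => cpowDerivCoeff c n (j + 1) * (c - n + (j + 1))
      + cpowDerivCoeff c n j * ((n - 2 * j : ℕ) : ℂ)

theorem cpowDerivCoeff_eq_zero {c : ℂ} {n j : ℕ} (h : n < 2 * j) : cpowDerivCoeff c n j = 0 := by
  induction n generalizing j with
  | zero => simp [cpowDerivCoeff, show j ≠ 0 by omega]
  | succ n ih =>
    obtain _ | j := j
    · omega
    · simp [cpowDerivCoeff, ih (show n < 2 * (j + 1) by omega),
        Nat.sub_eq_zero_of_le (show n ≤ 2 * j by omega)]

noncomputable def cpowDerivTerm (g : ℝ → ℂ) (c : ℂ) (n j : ℕ) (x : ℝ) : ℂ :=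
  g x ^ (c - n + j) * deriv g x ^ (n - 2 * j) * deriv (deriv g) x ^ j

theorem hasDerivAt_cpowDerivTerm {g : ℝ → ℂ} {c : ℂ} {x : ℝ}
    (hg : HasDerivAt g (deriv g x) x) (hg' : HasDerivAt (deriv g) (deriv (deriv g) x) x)
    (hg'' : HasDerivAt (deriv (deriv g)) 0 x) (hx : g x ∈ slitPlane) {n j : ℕ} (hj : 2 * j ≤ n) :
    HasDerivAt (cpowDerivTerm g c n j)
      ((c - n + j) * cpowDerivTerm g c (n + 1) j x
        + (n - 2 * j : ℕ) * cpowDerivTerm g c (n + 1) (j + 1) x) x := by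
  have hpow := (Complex.hasStrictDerivAt_cpow_const (c := c - n + j) hx).hasDerivAt.comp x hg
  refine ((hpow.mul (hg'.fun_pow (n - 2 * j))).mul (hg''.fun_pow j)).congr_deriv ?_
  have hexp : c - ((n + 1 : ℕ) : ℂ) + j = c - n + j - 1 := by push_cast; ring
  have hexp' : c - ((n + 1 : ℕ) : ℂ) + (j + 1 : ℕ) = c - n + j := by push_cast; ring
  obtain ⟨m, rfl⟩ := Nat.exists_eq_add_of_le hj
  simp only [cpowDerivTerm, hexp, hexp', Function.comp_apply, Pi.mul_apply,
    show 2 * j + m - 2 * j = m by omega, show 2 * j + m + 1 - 2 * j = m + 1 by omega,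
    show 2 * j + m + 1 - 2 * (j + 1) = m - 1 by omega]
  cases m with
  | zero => simp only [Nat.cast_zero]; ring
  | succ m => simp only [Nat.add_sub_cancel]; ring

theorem sum_cpowDerivCoeff_mul_succ (c : ℂ) (n : ℕ) (T : ℕ → ℂ) :
    ∑ j ∈ Finset.range (n + 1),
        cpowDerivCoeff c n j * ((c - n + j) * T j + (n - 2 * j : ℕ) * T (j + 1))
      = ∑ k ∈ Finset.range (n + 2), cpowDerivCoeff c (n + 1) k * T k := by
  have hshift : ∑ j ∈ Finset.range (n + 1), cpowDerivCoeff c n j * ((c - n + j) * T j)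
      = ∑ j ∈ Finset.range (n + 1),
          cpowDerivCoeff c n (j + 1) * ((c - n + (j + 1 : ℕ)) * T (j + 1))
        + cpowDerivCoeff c n 0 * ((c - n + (0 : ℕ)) * T 0) := by
    rw [← Finset.sum_range_succ' (fun j => cpowDerivCoeff c n j * ((c - n + j) * T j)) (n + 1),
      Finset.sum_range_succ _ (n + 1), cpowDerivCoeff_eq_zero (by omega), zero_mul, add_zero]
  have hsucc (j : ℕ) : cpowDerivCoeff c (n + 1) (j + 1) * T (j + 1)
      = cpowDerivCoeff c n (j + 1) * ((c - n + (j + 1 : ℕ)) * T (j + 1))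
        + cpowDerivCoeff c n j * ((n - 2 * j : ℕ) * T (j + 1)) := by
    rw [cpowDerivCoeff]; push_cast; ring
  rw [Finset.sum_range_succ' (fun k => cpowDerivCoeff c (n + 1) k * T k),
    Finset.sum_congr rfl fun j _ => hsucc j, Finset.sum_congr rfl fun j _ => mul_add _ _ _,
    Finset.sum_add_distrib, Finset.sum_add_distrib, hshift, cpowDerivCoeff]
  push_cast
  ring

theorem hasDerivAt_sum_cpowDerivCoeff_mul_cpowDerivTerm {g : ℝ → ℂ} {c : ℂ} {x : ℝ}
    (hg : HasDerivAt g (deriv g x) x) (hg' : HasDerivAt (deriv g) (deriv (deriv g) x) x)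
    (hg'' : HasDerivAt (deriv (deriv g)) 0 x) (hx : g x ∈ slitPlane) (n : ℕ) :
    HasDerivAt
      (fun y => ∑ j ∈ Finset.range (n + 1), cpowDerivCoeff c n j * cpowDerivTerm g c n j y)
      (∑ k ∈ Finset.range (n + 2), cpowDerivCoeff c (n + 1) k * cpowDerivTerm g c (n + 1) k x)
      x := by
  rw [← sum_cpowDerivCoeff_mul_succ]
  refine HasDerivAt.fun_sum fun j _ => ?_
  by_cases hj : 2 * j ≤ n
  · exact (hasDerivAt_cpowDerivTerm hg hg' hg'' hx hj).const_mul _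
  · simpa [cpowDerivCoeff_eq_zero (not_le.mp hj)] using hasDerivAt_const x (0 : ℂ)

theorem iteratedDerivWithin_cpow_eqOn_sum {g : ℝ → ℂ} {I : Set ℝ} (c : ℂ) (hI : IsOpen I)
    (hg : ContDiff ℝ 3 g) (h3 : ∀ x ∈ I, deriv (deriv (deriv g)) x = 0)
    (hs : ∀ x ∈ I, g x ∈ slitPlane) (n : ℕ) :
    EqOn (iteratedDerivWithin n (fun y => g y ^ c) I)
      (fun x => ∑ j ∈ Finset.range (n + 1), cpowDerivCoeff c n j * cpowDerivTerm g c n j x) I := by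
  induction n with
  | zero => intro x _; simp [cpowDerivCoeff, cpowDerivTerm]
  | succ n ih =>
    intro x hx
    have hg2 : Differentiable ℝ (deriv (deriv g)) := (hg.deriv' (n := 2)).differentiable_deriv_two
    have hg'' : HasDerivAt (deriv (deriv g)) 0 x := h3 x hx ▸ (hg2 x).hasDerivAt
    have hD := hasDerivAt_sum_cpowDerivCoeff_mul_cpowDerivTerm (c := c)
      (hg.differentiable (by norm_num) x).hasDerivAt
      ((hg.of_le (by norm_num)).differentiable_deriv_two x).hasDerivAt hg'' (hs x hx) n
    rw [iteratedDerivWithin_succ, derivWithin_of_isOpen hI hx,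
      (Filter.eventuallyEq_of_mem (hI.mem_nhds hx) ih).deriv_eq, hD.deriv]

theorem stmt5_general (n : ℕ) :
    ∃ A : ℕ → ℂ,
      ∀ (g : ℝ → ℂ) (I : Set ℝ), IsOpen I →
        ContDiff ℝ ⊤ g →
        (∀ x, deriv (deriv (deriv g)) x = 0) →
        (∀ x ∈ I, g x ∈ Complex.slitPlane) →
        ∀ x ∈ I,
          iteratedDerivWithin n (fun y => g y ^ ((1:ℂ)/2)) I x
            = ∑ j ∈ Finset.range (n / 2 + 1),
                A j * g x ^ ((1:ℂ)/2 - (n : ℂ) + (j : ℂ))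
                  * (deriv g x) ^ (n - 2 * j) * (deriv (deriv g) x) ^ j := by
  refine ⟨cpowDerivCoeff (1 / 2) n, fun g I hI hg h3 hs x hx => ?_⟩
  rw [iteratedDerivWithin_cpow_eqOn_sum _ hI (hg.of_le le_top) (fun x _ => h3 x) hs n hx]
  simp only [cpowDerivTerm, ← mul_assoc]
  refine (Finset.sum_subset (Finset.range_subset_range.mpr (by omega)) fun j hj hj' => ?_).symm
  rw [Finset.mem_range] at hj hj'
  rw [cpowDerivCoeff_eq_zero (by omega), zero_mul, zero_mul, zero_mul]

theorem stmt5 (n : ℕ) (hn : 0 < n) :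
    ∃ A : ℕ → ℂ,
      ∀ (g : ℝ → ℂ) (I : Set ℝ), IsOpen I →
        ContDiff ℝ ⊤ g →
        (∀ x, deriv (deriv (deriv g)) x = 0) →
        (∀ x ∈ I, g x ∈ Complex.slitPlane) →
        ∀ x ∈ I,
          iteratedDerivWithin n (fun y => g y ^ ((1:ℂ)/2)) I x
            = ∑ j ∈ Finset.range (n / 2 + 1),
                A j * g x ^ ((1:ℂ)/2 - (n : ℂ) + (j : ℂ))
                  * (deriv g x) ^ (n - 2 * j) * (deriv (deriv g) x) ^ j :=
  stmt5_general n
end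

section
/- Let W_k(x) = (x² − 1/k²)^{1/2} for x ∈ ℝ (principal branch of the square root), and let h(x) = Σ_{k=1}^∞ 3^{−k} W_k(x). Then h is continuous on ℝ, h is even (h(x) = h(−x)), and h is not C¹ on any neighborhood of the origin. -/
/-!
Writing `W_k(x) = F(x² - 1/k²)` with `F(t) = t^{1/2}`, which equals `√t` for `t ≥ 0` and `i√(-t)`
for `t < 0`, each `W_k` is continuous with `‖W_k(x)‖ ≤ |x| + 1`, so the series converges locally
uniformly and `h` is continuous; evenness is visible from the formula. Away from `x² = 1/k²`,
`W_k` has derivative `x / W_k(x)`. Near `p = 1/(j+1)` the other singular values `1/(k+1)²` stay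
at a uniform distance from `x²`, so the series without its `j`-th term may be differentiated
termwise at `p`. If `h` were `C¹` near `0`, it would be differentiable at such `p` (they tend
to `0`), hence so would be `W_{j+1}`; but `‖W_{j+1}‖²` is `|x² - p²|`, which is not differentiable
at `p`.
-/

open Complex Set

/-- `W_k(x) = (x² − 1/k²)^{1/2}`, principal branch. -/
noncomputable def Wfun (k : ℕ) (x : ℝ) : ℂ :=
  ((x : ℂ) ^ 2 - 1 / (k : ℂ) ^ 2) ^ ((1:ℂ)/2)

/-- `h(x) = Σ_{k≥1} 3^{−k} W_k(x)`. -/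
noncomputable def hfun (x : ℝ) : ℂ :=
  ∑' k : ℕ, ((3 : ℂ) ^ (k + 1 : ℕ))⁻¹ * Wfun (k + 1) x

noncomputable def hfunTerm (k : ℕ) (x : ℝ) : ℂ :=
  ((3 : ℂ) ^ (k + 1))⁻¹ * Wfun (k + 1) x

namespace Complex

theorem ofReal_cpow_one_half (t : ℝ) : (t : ℂ) ^ (1 / 2 : ℂ) = √t + √(-t) * I := by
  have half : (1 / 2 : ℂ) = ((1 / 2 : ℝ) : ℂ) := by push_cast; ring
  rcases le_or_gt 0 t with ht | ht
  · rw [half, ← ofReal_cpow ht, Real.sqrt_eq_rpow, Real.sqrt_eq_zero_of_nonpos (by linarith)]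
    simp
  · rw [ofReal_cpow_of_nonpos ht.le, ← ofReal_neg, half, ← ofReal_cpow (by linarith),
      Real.sqrt_eq_zero_of_nonpos ht.le, ← Real.sqrt_eq_rpow, ← half,
      show (Real.pi : ℂ) * I * (1 / 2) = (Real.pi / 2 : ℝ) * I by push_cast; ring, exp_mul_I,
      ← ofReal_cos, ← ofReal_sin, Real.cos_pi_div_two, Real.sin_pi_div_two]
    simp

theorem norm_ofReal_cpow_one_half (t : ℝ) : ‖(t : ℂ) ^ (1 / 2 : ℂ)‖ = √|t| := by
  rw [show (1 / 2 : ℂ) = ((1 / 2 : ℝ) : ℂ) by push_cast; ring, norm_cpow_real, norm_real,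
    Real.norm_eq_abs, Real.sqrt_eq_rpow]

theorem continuous_ofReal_cpow_one_half : Continuous fun t : ℝ => (t : ℂ) ^ (1 / 2 : ℂ) := by
  simp only [ofReal_cpow_one_half]
  fun_prop

theorem hasDerivAt_ofReal_cpow_one_half {t : ℝ} (ht : t ≠ 0) :
    HasDerivAt (fun t : ℝ => (t : ℂ) ^ (1 / 2 : ℂ)) (1 / (2 * (t : ℂ) ^ (1 / 2 : ℂ))) t := by
  simp only [ofReal_cpow_one_half]
  have h := ((Real.hasDerivAt_sqrt ht).ofReal_comp).add
    (((Real.hasDerivAt_sqrt (neg_ne_zero.2 ht)).comp t (hasDerivAt_neg t)).ofReal_comp.mul_const I)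
  refine h.congr_deriv ?_
  rcases ht.lt_or_gt with ht | ht
  · have hs : (√(-t) : ℂ) ≠ 0 := by simp [Real.sqrt_eq_zero', ht]
    rw [Real.sqrt_eq_zero_of_nonpos ht.le]
    push_cast
    field_simp
    ring_nf
    rw [I_sq]
    ring
  · rw [Real.sqrt_eq_zero_of_nonpos (by linarith : -t ≤ 0)]
    simp

end Complex

theorem Wfun_eq (k : ℕ) (x : ℝ) : Wfun k x = ((x ^ 2 - 1 / (k : ℝ) ^ 2 : ℝ) : ℂ) ^ (1 / 2 : ℂ) := by
  simp [Wfun]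

theorem continuous_Wfun (k : ℕ) : Continuous (Wfun k) := by
  simp only [funext (Wfun_eq k)]
  exact continuous_ofReal_cpow_one_half.comp (by fun_prop)

theorem norm_Wfun (k : ℕ) (x : ℝ) : ‖Wfun k x‖ = √|x ^ 2 - 1 / (k : ℝ) ^ 2| := by
  rw [Wfun_eq, norm_ofReal_cpow_one_half]

theorem norm_Wfun_le (k : ℕ) (x : ℝ) : ‖Wfun k x‖ ≤ |x| + 1 := by
  have hc : 1 / (k : ℝ) ^ 2 ≤ 1 := by
    rcases k.eq_zero_or_pos with rfl | hk
    · simp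
    · exact div_le_one_of_le₀ (one_le_pow₀ (by exact_mod_cast hk)) (by positivity)
  rw [norm_Wfun, Real.sqrt_le_iff]
  refine ⟨by positivity, abs_le.2 ⟨?_, ?_⟩⟩ <;> nlinarith [sq_abs x, abs_nonneg x,
    (by positivity : 0 ≤ 1 / (k : ℝ) ^ 2)]

theorem hasDerivAt_Wfun {k : ℕ} {x : ℝ} (hx : x ^ 2 ≠ 1 / (k : ℝ) ^ 2) :
    HasDerivAt (Wfun k) (x / Wfun k x) x := by
  have h := (hasDerivAt_ofReal_cpow_one_half (sub_ne_zero.2 hx)).scomp x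
    ((hasDerivAt_pow 2 x).sub_const (1 / (k : ℝ) ^ 2))
  rw [Wfun_eq, show Wfun k = _ from funext (Wfun_eq k)]
  refine h.congr_deriv ?_
  rw [real_smul]
  push_cast
  field_simp

theorem norm_deriv_Wfun_le {k : ℕ} {x δ B : ℝ} (hδ : 0 < δ) (hx : δ ≤ |x ^ 2 - 1 / (k : ℝ) ^ 2|)
    (hB : |x| ≤ B) : ‖(x : ℂ) / Wfun k x‖ ≤ B / √δ := by
  rw [norm_div, norm_Wfun, norm_real, Real.norm_eq_abs]
  exact div_le_div₀ ((abs_nonneg x).trans hB) hB (Real.sqrt_pos.2 hδ) (Real.sqrt_le_sqrt hx)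

theorem not_differentiableAt_Wfun {k : ℕ} (hk : k ≠ 0) : ¬ DifferentiableAt ℝ (Wfun k) (1 / k) := by
  intro hW
  set p : ℝ := 1 / k
  have hp : 0 < p := by positivity
  have hp2 : p ^ 2 = 1 / (k : ℝ) ^ 2 := by simp [p]
  have hWp : Wfun k p = 0 := by simp [Wfun_eq, ← hp2]
  have h0 : HasDerivWithinAt (fun x => ‖Wfun k x‖ ^ 2) 0 (Ici p) p := by
    simpa [hWp] using hW.hasDerivAt.norm_sq.hasDerivWithinAt
  have h2p : HasDerivWithinAt (fun x => ‖Wfun k x‖ ^ 2) (2 * p) (Ici p) p := by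
    have := ((hasDerivAt_pow 2 p).sub_const (p ^ 2)).hasDerivWithinAt (s := Ici p)
    refine (this.congr_of_mem (fun x hx => ?_) self_mem_Ici).congr_deriv (by ring)
    rw [norm_Wfun, Real.sq_sqrt (abs_nonneg _), ← hp2, abs_of_nonneg]
    simp only [mem_Ici] at hx
    nlinarith
  have := (uniqueDiffOn_Ici p p self_mem_Ici).eq_deriv _ h0 h2p
  linarith

theorem summable_inv_three_pow_mul (A : ℝ) : Summable fun k : ℕ => ((3 : ℝ) ^ (k + 1))⁻¹ * A :=
  (((summable_nat_add_iff 1).2 (summable_geometric_of_lt_one (by norm_num)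
    (by norm_num : (3 : ℝ)⁻¹ < 1))).mul_right A).congr fun k => by rw [inv_pow]

theorem norm_inv_three_pow_mul_le (k : ℕ) {z : ℂ} {A : ℝ} (h : ‖z‖ ≤ A) :
    ‖((3 : ℂ) ^ (k + 1))⁻¹ * z‖ ≤ ((3 : ℝ) ^ (k + 1))⁻¹ * A := by
  rw [norm_mul, norm_inv, norm_pow, RCLike.norm_ofNat]
  gcongr

theorem norm_hfunTerm_le (k : ℕ) (x : ℝ) : ‖hfunTerm k x‖ ≤ ((3 : ℝ) ^ (k + 1))⁻¹ * (|x| + 1) :=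
  norm_inv_three_pow_mul_le k (norm_Wfun_le _ x)

theorem summable_hfunTerm (x : ℝ) : Summable fun k => hfunTerm k x :=
  .of_norm_bounded (summable_inv_three_pow_mul _) fun k => norm_hfunTerm_le k x

theorem continuous_hfun : Continuous hfun := by
  refine continuous_iff_continuousAt.2 fun x₀ => ?_
  set R := |x₀| + 1
  have h : ContinuousOn hfun (Icc (-R) R) :=
    continuousOn_tsum (fun k => (continuous_const.mul (continuous_Wfun _)).continuousOn)
      (summable_inv_three_pow_mul (R + 1)) fun k x hx =>
        norm_inv_three_pow_mul_le k ((norm_Wfun_le _ x).trans (by linarith [abs_le.2 hx]))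
  exact h.continuousAt (Icc_mem_nhds (by linarith [neg_abs_le x₀]) (by linarith [le_abs_self x₀]))

theorem hfun_neg (x : ℝ) : hfun (-x) = hfun x := by
  simp only [hfun, Wfun, ofReal_neg, neg_sq]

theorem inv_sq_gap {j k : ℕ} (hk : k ≠ j) :
    1 / ((j : ℝ) + 1) ^ 2 - 1 / ((j : ℝ) + 2) ^ 2 ≤
      |1 / ((k : ℝ) + 1) ^ 2 - 1 / ((j : ℝ) + 1) ^ 2| := by
  rcases hk.lt_or_gt with hkj | hjk
  · have hk1 : (k : ℝ) + 1 ≤ j := by exact_mod_cast hkj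
    have hk0 : (0 : ℝ) < k + 1 := by positivity
    have hj : (0 : ℝ) < j := by linarith
    have convex : 1 / ((j : ℝ) + 1) ^ 2 - 1 / ((j : ℝ) + 2) ^ 2 ≤
        1 / (j : ℝ) ^ 2 - 1 / ((j : ℝ) + 1) ^ 2 := by
      field_simp
      nlinarith
    have hkj' : 1 / (j : ℝ) ^ 2 ≤ 1 / ((k : ℝ) + 1) ^ 2 := by gcongr
    rw [abs_of_nonneg (sub_nonneg.2 (by gcongr))]
    linarith
  · have hk1 : (j : ℝ) + 2 ≤ k + 1 := by
      have : (j : ℝ) + 1 ≤ k := by exact_mod_cast hjk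
      linarith
    rw [abs_sub_comm, abs_of_nonneg (sub_nonneg.2 (by gcongr))]
    gcongr

theorem exists_Ioo_inv_sq_gap (j : ℕ) : ∃ a b δ : ℝ, 0 < δ ∧ 1 / ((j : ℝ) + 1) ∈ Ioo a b ∧
    ∀ y ∈ Ioo a b, |y| ≤ b ∧ ∀ k ≠ j, δ ≤ |y ^ 2 - 1 / ((k : ℝ) + 1) ^ 2| := by
  set p : ℝ := 1 / ((j : ℝ) + 1)
  set γ := p ^ 2 - 1 / ((j : ℝ) + 2) ^ 2
  have hp : 0 < p := by positivity
  have hp2 : p ^ 2 = 1 / ((j : ℝ) + 1) ^ 2 := by rw [div_pow, one_pow]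
  have hγ : 0 < γ := by
    rw [sub_pos, hp2]
    gcongr
    linarith
  have hγp : γ < p ^ 2 := sub_lt_self _ (by positivity)
  refine ⟨√(p ^ 2 - γ / 2), √(p ^ 2 + γ / 2), γ / 2, by positivity,
    ⟨(Real.sqrt_lt' hp).2 (by linarith), (Real.lt_sqrt hp.le).2 (by linarith)⟩, ?_⟩
  rintro y ⟨hay, hyb⟩
  have hy : 0 < y := (Real.sqrt_nonneg _).trans_lt hay
  have hy2 : |y ^ 2 - p ^ 2| < γ / 2 := abs_sub_lt_iff.2
    ⟨by linarith [(Real.lt_sqrt hy.le).1 hyb], by linarith [(Real.sqrt_lt' hy).1 hay]⟩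
  refine ⟨(abs_of_pos hy).trans_le hyb.le, fun k hk => ?_⟩
  have := inv_sq_gap hk
  rw [← hp2] at this
  linarith [abs_sub_le (1 / ((k : ℝ) + 1) ^ 2) (y ^ 2) (p ^ 2),
    abs_sub_comm (y ^ 2) (1 / ((k : ℝ) + 1) ^ 2)]

theorem differentiableAt_tsum_ite_ne (j : ℕ) :
    DifferentiableAt ℝ (fun x => ∑' k, if k = j then 0 else hfunTerm k x) (1 / ((j : ℝ) + 1)) := by
  obtain ⟨a, b, δ, hδ, hp, hgap⟩ := exists_Ioo_inv_sq_gap j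
  have hderiv : ∀ (k : ℕ), ∀ y ∈ Ioo a b, HasDerivAt
      (fun x => if k = j then 0 else hfunTerm k x)
      (if k = j then 0 else ((3 : ℂ) ^ (k + 1))⁻¹ * (y / Wfun (k + 1) y)) y := by
    intro k y hy
    split_ifs with hk
    · exact hasDerivAt_const y 0
    · refine (hasDerivAt_Wfun fun h => ?_).const_mul _
      have := (hgap y hy).2 k hk
      push_cast at h
      rw [h, sub_self, abs_zero] at this
      linarith
  have hbound : ∀ (k : ℕ), ∀ y ∈ Ioo a b,
      ‖if k = j then 0 else ((3 : ℂ) ^ (k + 1))⁻¹ * (y / Wfun (k + 1) y)‖ ≤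
        ((3 : ℝ) ^ (k + 1))⁻¹ * (b / √δ) := by
    intro k y hy
    split_ifs with hk
    · rw [norm_zero]
      have : 0 ≤ b := (abs_nonneg y).trans (hgap y hy).1
      positivity
    · refine norm_inv_three_pow_mul_le k (norm_deriv_Wfun_le hδ ?_ (hgap y hy).1)
      push_cast
      exact (hgap y hy).2 k hk
  refine (hasDerivAt_tsum_of_isPreconnected (summable_inv_three_pow_mul _) isOpen_Ioo
    isPreconnected_Ioo hderiv hbound hp ?_ hp).differentiableAt
  exact .of_norm_bounded (summable_inv_three_pow_mul (|1 / ((j : ℝ) + 1)| + 1)) fun k => by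
    split_ifs
    · rw [norm_zero]; positivity
    · exact norm_hfunTerm_le k _

theorem not_contDiffOn_hfun {U : Set ℝ} (hU : U ∈ nhds 0) : ¬ ContDiffOn ℝ 1 hfun U := by
  intro h
  obtain ⟨j, hj⟩ :=
    (tendsto_one_div_add_atTop_nhds_zero_nat.eventually (interior_mem_nhds.2 hU)).exists
  have hdiff : DifferentiableAt ℝ hfun (1 / ((j : ℝ) + 1)) :=
    (h.differentiableOn one_ne_zero).differentiableAt (mem_interior_iff_mem_nhds.1 hj)
  have hsplit : Wfun (j + 1) =
      fun x => (3 : ℂ) ^ (j + 1) * (hfun x - ∑' k, if k = j then 0 else hfunTerm k x) := by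
    ext x
    rw [show hfun x = ∑' k, hfunTerm k x from rfl, (summable_hfunTerm x).tsum_eq_add_tsum_ite j,
      hfunTerm]
    field_simp
    ring
  apply not_differentiableAt_Wfun j.succ_ne_zero
  rw [hsplit, Nat.cast_succ]
  exact (hdiff.sub (differentiableAt_tsum_ite_ne j)).const_mul _

theorem stmt6 :
    Continuous hfun ∧ (∀ x : ℝ, hfun (-x) = hfun x) ∧
    ∀ U ∈ nhds (0:ℝ), ¬ ContDiffOn ℝ 1 hfun U :=
  ⟨continuous_hfun, hfun_neg, fun _ => not_contDiffOn_hfun⟩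
end
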